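/- Let m, n be positive integers and q_max > 0. Let X be a random m×n real matrix whose entries are i.i.d. centered Gaussian random variables with variance s² > 0, and let Q denote per-row round-to-nearest quantization: for each row i, Q(X)_{ij} = s_i · round(X_{ij}/s_i) with scale s_i = max_j |X_{ij}| / q_max (and Q(X)_i = 0 if the row is zero). Then 𝔼[‖X − Q(X)‖_F] ≤ (√(log(mn·π)) / q_max) · 𝔼[‖X‖_F]. -/

import Mathlib

open MeasureTheory ProbabilityTheory

noncomputable def frobNorm {m n : Type*} [Fintype m] [Fintype n] (A : Matrix m n ℝ) : ℝ :=
  Real.sqrt (∑ i, ∑ j, (A i j) ^ 2)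

/-!
Rounding moves every entry of row `i` by at most half the row scale `max_j |X_ij| / q_max`, so
`‖X - Q(X)‖_F ≤ √(mn) · max_ij |X_ij| / (2 q_max)`. Jensen's inequality for `exp (t x)` together
with a union bound over the `mn` entries gives `𝔼[max_ij X_ij²] ≤ log (mn · 𝔼[exp (t X²)]) / t`;
at `t = π / (8v)` one has `𝔼[exp (t X²)] = (1 - π/4)^(-1/2) ≤ π`, hence
`𝔼[max_ij |X_ij|] ≤ √(8v/π · log (mnπ))`. On the other side, Cauchy–Schwarz and
`𝔼|X_ij| = √(2v/π)` give `𝔼‖X‖_F ≥ √(mn · 2v/π)`, and the two bounds match exactly.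
-/

open Real
open scoped NNReal

section Gaussian

variable {v : ℝ≥0}

lemma integral_Ioi_mul_exp_neg_mul_sq {b : ℝ} (hb : 0 < b) :
    ∫ x in Set.Ioi (0 : ℝ), x * exp (-b * x ^ 2) = (2 * b)⁻¹ := by
  have h := integral_mul_cexp_neg_mul_sq (b := (b : ℂ)) (by simpa using hb)
  exact_mod_cast h

lemma gaussianPDFReal_zero (v : ℝ≥0) (x : ℝ) :
    gaussianPDFReal 0 v x = (√(2 * π * v))⁻¹ * exp (-(2 * v : ℝ)⁻¹ * x ^ 2) := by
  rw [gaussianPDFReal]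
  ring_nf

lemma gaussianPDFReal_zero_mul_exp (v : ℝ≥0) (t x : ℝ) :
    gaussianPDFReal 0 v x * exp (t * x ^ 2) =
      (√(2 * π * v))⁻¹ * exp (-((2 * v : ℝ)⁻¹ - t) * x ^ 2) := by
  rw [gaussianPDFReal_zero, mul_assoc, ← exp_add]
  ring_nf

lemma integrable_gaussianReal_iff {μ : ℝ} (hv : v ≠ 0) {f : ℝ → ℝ} :
    Integrable f (gaussianReal μ v) ↔ Integrable (fun x => gaussianPDFReal μ v x * f x) := by
  rw [gaussianReal_of_var_ne_zero _ hv, integrable_withDensity_iff_integrable_smul'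
    (measurable_gaussianPDF μ v) (ae_of_all _ fun _ => gaussianPDF_lt_top)]
  simp [gaussianPDF, ENNReal.toReal_ofReal (gaussianPDFReal_nonneg μ v _)]

lemma integral_abs_gaussianReal (hv : v ≠ 0) :
    ∫ x, |x| ∂gaussianReal 0 v = √(2 * v / π) := by
  have hv' : (0 : ℝ) < v := by positivity
  have hpdf (x : ℝ) : gaussianPDFReal 0 v x • |x| =
      (√(2 * π * v))⁻¹ * (|x| * exp (-(2 * v : ℝ)⁻¹ * |x| ^ 2)) := by
    rw [smul_eq_mul, gaussianPDFReal_zero, sq_abs]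
    ring
  simp_rw [integral_gaussianReal_eq_integral_smul hv, hpdf, integral_const_mul,
    integral_comp_abs (f := fun x => x * exp (-(2 * v : ℝ)⁻¹ * x ^ 2)),
    integral_Ioi_mul_exp_neg_mul_sq (by positivity : (0 : ℝ) < (2 * v : ℝ)⁻¹)]
  rw [eq_comm, sqrt_eq_iff_mul_self_eq (by positivity) (by positivity)]
  field_simp
  rw [sq_sqrt (by positivity)]

lemma inv_two_mul_sub_eq_div {v t : ℝ} (hv : v ≠ 0) :
    (2 * v)⁻¹ - t = (1 - 2 * t * v) / (2 * v) := by
  field_simp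

lemma integrable_exp_mul_sq_gaussianReal (hv : v ≠ 0) {t : ℝ} (ht : 2 * t * v < 1) :
    Integrable (fun x => exp (t * x ^ 2)) (gaussianReal 0 v) := by
  have hv' : (0 : ℝ) < v := by positivity
  have : 0 < 1 - 2 * t * v := by linarith
  rw [integrable_gaussianReal_iff hv]
  simp_rw [gaussianPDFReal_zero_mul_exp]
  refine (integrable_exp_neg_mul_sq ?_).const_mul _
  rw [inv_two_mul_sub_eq_div hv'.ne']
  positivity

lemma integral_exp_mul_sq_gaussianReal (hv : v ≠ 0) {t : ℝ} (ht : 2 * t * v < 1) :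
    ∫ x, exp (t * x ^ 2) ∂gaussianReal 0 v = (√(1 - 2 * t * v))⁻¹ := by
  have hv' : (0 : ℝ) < v := by positivity
  have : 0 < 1 - 2 * t * v := by linarith
  simp_rw [integral_gaussianReal_eq_integral_smul hv, smul_eq_mul, gaussianPDFReal_zero_mul_exp,
    integral_const_mul, integral_gaussian, inv_two_mul_sub_eq_div hv'.ne']
  field_simp
  rw [sqrt_div' _ (by linarith)]

end Gaussian

lemma inv_sqrt_one_sub_pi_div_four_le_pi : (√(1 - π / 4))⁻¹ ≤ π := by
  have h1 := pi_gt_d2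
  have h2 := pi_lt_d2
  rw [inv_le_comm₀ (sqrt_pos.2 (by linarith)) pi_pos, le_sqrt (by positivity) (by linarith),
    inv_pow, inv_le_iff_one_le_mul₀ (by positivity)]
  nlinarith

section HasLaw

variable {Ω 𝓧 : Type*} [MeasurableSpace Ω] [MeasurableSpace 𝓧] {X : Ω → 𝓧} {P : Measure Ω}
  {ν : Measure 𝓧}

lemma ProbabilityTheory.HasLaw.integrable_fun_comp (hX : HasLaw X ν P) {f : 𝓧 → ℝ}
    (hf : Integrable f ν) : Integrable (fun ω => f (X ω)) P := by
  rw [← hX.map_eq] at hf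
  exact hf.comp_aemeasurable hX.aemeasurable

lemma ProbabilityTheory.HasLaw.integral_fun_comp (hX : HasLaw X ν P) {f : 𝓧 → ℝ}
    (hf : AEStronglyMeasurable f ν) : ∫ ω, f (X ω) ∂P = ∫ x, f x ∂ν :=
  hX.integral_comp hf

end HasLaw

section Jensen

variable {Ω ι : Type*} [MeasurableSpace Ω] {μ : Measure Ω} [IsProbabilityMeasure μ]

lemma integral_le_log_card_mul_div [Fintype ι] {F : Ω → ℝ} {Z : ι → Ω → ℝ} {t K : ℝ}
    (ht : 0 < t) (hF : Integrable F μ) (hFZ : ∀ ω, ∃ j, F ω ≤ Z j ω)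
    (hZ : ∀ j, Integrable (fun ω => exp (t * Z j ω)) μ)
    (hK : ∀ j, ∫ ω, exp (t * Z j ω) ∂μ ≤ K) :
    ∫ ω, F ω ∂μ ≤ log (Fintype.card ι * K) / t := by
  have hexp_le (ω : Ω) : exp (t * F ω) ≤ ∑ j, exp (t * Z j ω) := by
    obtain ⟨j, hj⟩ := hFZ ω
    exact (exp_le_exp.2 (mul_le_mul_of_nonneg_left hj ht.le)).trans
      (Finset.single_le_sum (f := fun j => exp (t * Z j ω)) (fun j _ => (exp_pos _).le)
        (Finset.mem_univ j))
  have hsum : Integrable (fun ω => ∑ j, exp (t * Z j ω)) μ :=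
    integrable_finsetSum _ fun j _ => hZ j
  have hexp : Integrable (fun ω => exp (t * F ω)) μ :=
    hsum.mono' (continuous_exp.comp_aestronglyMeasurable (hF.aestronglyMeasurable.const_mul t))
      (ae_of_all _ fun ω => by rw [norm_of_nonneg (exp_pos _).le]; exact hexp_le ω)
  have hjensen : exp (∫ ω, t * F ω ∂μ) ≤ ∫ ω, exp (t * F ω) ∂μ :=
    convexOn_exp.map_integral_le continuous_exp.continuousOn isClosed_univ
      (ae_of_all _ fun _ => trivial) (hF.const_mul t) hexp
  have hbound : ∫ ω, exp (t * F ω) ∂μ ≤ Fintype.card ι * K := calc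
    _ ≤ ∫ ω, ∑ j, exp (t * Z j ω) ∂μ := integral_mono hexp hsum hexp_le
    _ = ∑ j, ∫ ω, exp (t * Z j ω) ∂μ := integral_finsetSum _ fun j _ => hZ j
    _ ≤ ∑ _j : ι, K := Finset.sum_le_sum fun j _ => hK j
    _ = Fintype.card ι * K := by simp
  rw [le_div_iff₀ ht, mul_comm, ← integral_const_mul,
    le_log_iff_exp_le ((exp_pos _).trans_le (hjensen.trans hbound))]
  exact hjensen.trans hbound

lemma integral_le_sqrt_integral_sq {f : Ω → ℝ} (hf0 : 0 ≤ f) (hf : Integrable f μ)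
    (hf2 : Integrable (fun ω => f ω ^ 2) μ) :
    ∫ ω, f ω ∂μ ≤ √(∫ ω, f ω ^ 2 ∂μ) := by
  have h := (strictConcaveOn_sqrt.concaveOn).le_map_integral continuous_sqrt.continuousOn
    isClosed_Ici (ae_of_all _ fun ω => sq_nonneg (f ω)) hf2
    (by simpa [Function.comp_def, sqrt_sq (hf0 _)] using hf)
  simpa [sqrt_sq (hf0 _)] using h

end Jensen

lemma abs_sub_mul_round_div_le (x : ℝ) {s : ℝ} (hs : 0 < s) :
    |x - s * round (x / s)| ≤ s / 2 := by
  calc |x - s * round (x / s)| = |s * (x / s - round (x / s))| := by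
        rw [mul_sub, mul_div_cancel₀ _ hs.ne']
    _ = s * |x / s - round (x / s)| := by rw [abs_mul, abs_of_pos hs]
    _ ≤ s * (1 / 2) := mul_le_mul_of_nonneg_left (abs_sub_round _) hs.le
    _ = s / 2 := by ring

section Matrix

variable {m n : Type*}

noncomputable def rtnQuantize [Fintype n] (qmax : ℝ) (A : Matrix m n ℝ) : Matrix m n ℝ :=
  fun i j => if A i = 0 then 0
    else ((⨆ j', |A i j'|) / qmax) * (round (A i j / ((⨆ j', |A i j'|) / qmax)) : ℝ)

lemma abs_sub_rtnQuantize_le [Fintype n] {qmax : ℝ} (hq : 0 < qmax) (A : Matrix m n ℝ)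
    (i : m) (j : n) : |A i j - rtnQuantize qmax A i j| ≤ (⨆ j', |A i j'|) / (2 * qmax) := by
  by_cases hrow : A i = 0
  · simp [rtnQuantize, hrow]
  · obtain ⟨j₀, hj₀⟩ := Function.ne_iff.1 hrow
    have hs : 0 < (⨆ j', |A i j'|) / qmax := div_pos ((abs_pos.2 hj₀).trans_le
      (le_ciSup (f := fun j' => |A i j'|) (Set.finite_range _).bddAbove j₀)) hq
    simp only [rtnQuantize, hrow, if_false]
    convert abs_sub_mul_round_div_le (A i j) hs using 1
    ring

noncomputable def maxAbsEntry (A : Matrix m n ℝ) : ℝ := ⨆ p : m × n, |A p.1 p.2|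

lemma maxAbsEntry_nonneg (A : Matrix m n ℝ) : 0 ≤ maxAbsEntry A :=
  Real.iSup_nonneg fun _ => abs_nonneg _

variable [Fintype m] [Fintype n]

lemma abs_le_maxAbsEntry (A : Matrix m n ℝ) (i : m) (j : n) : |A i j| ≤ maxAbsEntry A :=
  le_ciSup (f := fun p : m × n => |A p.1 p.2|) (Set.finite_range _).bddAbove (i, j)

lemma exists_maxAbsEntry_eq [Nonempty m] [Nonempty n] (A : Matrix m n ℝ) :
    ∃ i j, maxAbsEntry A = |A i j| := by
  obtain ⟨p, hp⟩ := exists_eq_ciSup_of_finite (f := fun p : m × n => |A p.1 p.2|)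
  exact ⟨p.1, p.2, hp.symm⟩

lemma frobNorm_sq (A : Matrix m n ℝ) : frobNorm A ^ 2 = ∑ i, ∑ j, A i j ^ 2 :=
  sq_sqrt (Finset.sum_nonneg fun _ _ => Finset.sum_nonneg fun _ _ => sq_nonneg _)

lemma maxAbsEntry_le_frobNorm (A : Matrix m n ℝ) : maxAbsEntry A ≤ frobNorm A :=
  Real.iSup_le (fun p => abs_le_sqrt <|
    (Finset.single_le_sum (f := fun j => A p.1 j ^ 2) (fun _ _ => sq_nonneg _)
      (Finset.mem_univ p.2)).trans
    (Finset.single_le_sum (f := fun i => ∑ j, A i j ^ 2)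
      (fun _ _ => Finset.sum_nonneg fun _ _ => sq_nonneg _) (Finset.mem_univ p.1)))
    (sqrt_nonneg _)

lemma frobNorm_le_of_abs_le {A : Matrix m n ℝ} {c : ℝ} (hc : 0 ≤ c)
    (h : ∀ i j, |A i j| ≤ c) : frobNorm A ≤ √(Fintype.card m * Fintype.card n) * c := by
  have hsum : ∑ i, ∑ j, A i j ^ 2 ≤ Fintype.card m * Fintype.card n * c ^ 2 := calc
    _ ≤ ∑ _i : m, ∑ _j : n, c ^ 2 := Finset.sum_le_sum fun i _ => Finset.sum_le_sum fun j _ =>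
          sq_abs (A i j) ▸ pow_le_pow_left₀ (abs_nonneg _) (h i j) 2
    _ = _ := by simp [mul_assoc]
  calc frobNorm A ≤ √(Fintype.card m * Fintype.card n * c ^ 2) := sqrt_le_sqrt hsum
    _ = _ := by rw [sqrt_mul (by positivity), sqrt_sq hc]

lemma frobNorm_sub_rtnQuantize_le {qmax : ℝ} (hq : 0 < qmax) (A : Matrix m n ℝ) :
    frobNorm (A - rtnQuantize qmax A) ≤
      √(Fintype.card m * Fintype.card n) * (maxAbsEntry A / (2 * qmax)) := by
  refine frobNorm_le_of_abs_le (div_nonneg (maxAbsEntry_nonneg A) (by positivity))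
    fun i j => (abs_sub_rtnQuantize_le hq A i j).trans ?_
  gcongr
  exact Real.iSup_le (fun j => abs_le_maxAbsEntry A i j) (maxAbsEntry_nonneg A)

lemma sum_abs_le_sqrt_card_mul_frobNorm (A : Matrix m n ℝ) :
    ∑ i, ∑ j, |A i j| ≤ √(Fintype.card m * Fintype.card n) * frobNorm A := by
  have h := sq_sum_le_card_mul_sum_sq (s := Finset.univ) (f := fun p : m × n => |A p.1 p.2|)
  simp only [Finset.card_univ, Fintype.card_prod, Fintype.sum_prod_type, sq_abs] at h
  rw [frobNorm, ← sqrt_mul (by positivity)]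
  exact le_sqrt_of_sq_le (by exact_mod_cast h)

end Matrix

section GaussianMatrix

variable {m n Ω : Type*} [Fintype m] [Fintype n] [MeasurableSpace Ω] {μ : Measure Ω}
  {v : ℝ≥0} {X : Ω → Matrix m n ℝ}

lemma measurable_maxAbsEntry (hmeas : ∀ i j, Measurable fun ω => X ω i j) :
    Measurable fun ω => maxAbsEntry (X ω) :=
  Measurable.iSup fun p => (hmeas p.1 p.2).abs

lemma measurable_frobNorm (hmeas : ∀ i j, Measurable fun ω => X ω i j) :
    Measurable fun ω => frobNorm (X ω) := by
  unfold frobNorm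
  fun_prop

lemma integrable_frobNorm_sq (hX : ∀ i j, HasLaw (fun ω => X ω i j) (gaussianReal 0 v) μ) :
    Integrable (fun ω => frobNorm (X ω) ^ 2) μ := by
  simp_rw [frobNorm_sq]
  exact integrable_finsetSum _ fun i _ => integrable_finsetSum _ fun j _ =>
    (hX i j).integrable_fun_comp (memLp_id_gaussianReal 2).integrable_sq

lemma integrable_maxAbsEntry_sq (hmeas : ∀ i j, Measurable fun ω => X ω i j)
    (hX : ∀ i j, HasLaw (fun ω => X ω i j) (gaussianReal 0 v) μ) :
    Integrable (fun ω => maxAbsEntry (X ω) ^ 2) μ :=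
  (integrable_frobNorm_sq hX).mono'
    ((measurable_maxAbsEntry hmeas).pow_const 2).aestronglyMeasurable
    (ae_of_all _ fun ω => by
      rw [norm_of_nonneg (sq_nonneg _)]
      exact pow_le_pow_left₀ (maxAbsEntry_nonneg _) (maxAbsEntry_le_frobNorm _) 2)

variable [IsProbabilityMeasure μ]

lemma integrable_maxAbsEntry (hmeas : ∀ i j, Measurable fun ω => X ω i j)
    (hX : ∀ i j, HasLaw (fun ω => X ω i j) (gaussianReal 0 v) μ) :
    Integrable (fun ω => maxAbsEntry (X ω)) μ :=
  ((memLp_two_iff_integrable_sq (measurable_maxAbsEntry hmeas).aestronglyMeasurable).2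
    (integrable_maxAbsEntry_sq hmeas hX)).integrable one_le_two

lemma integrable_frobNorm (hmeas : ∀ i j, Measurable fun ω => X ω i j)
    (hX : ∀ i j, HasLaw (fun ω => X ω i j) (gaussianReal 0 v) μ) :
    Integrable (fun ω => frobNorm (X ω)) μ :=
  ((memLp_two_iff_integrable_sq (measurable_frobNorm hmeas).aestronglyMeasurable).2
    (integrable_frobNorm_sq hX)).integrable one_le_two

lemma integral_maxAbsEntry_sq_le [Nonempty m] [Nonempty n] (hv : v ≠ 0)
    (hmeas : ∀ i j, Measurable fun ω => X ω i j)
    (hX : ∀ i j, HasLaw (fun ω => X ω i j) (gaussianReal 0 v) μ) :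
    ∫ ω, maxAbsEntry (X ω) ^ 2 ∂μ ≤ 8 * v / π * log (Fintype.card m * Fintype.card n * π) := by
  have hv' : (0 : ℝ) < v := by positivity
  have ht : 2 * (π / (8 * v)) * v = π / 4 := by field_simp; ring
  have h := integral_le_log_card_mul_div (Z := fun (p : m × n) ω => X ω p.1 p.2 ^ 2) (K := π)
    (by positivity : 0 < π / (8 * v)) (integrable_maxAbsEntry_sq hmeas hX)
    (fun ω => by
      obtain ⟨i, j, hij⟩ := exists_maxAbsEntry_eq (X ω)
      exact ⟨(i, j), by rw [hij, sq_abs]⟩)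
    (fun p => (hX p.1 p.2).integrable_fun_comp
      (integrable_exp_mul_sq_gaussianReal hv (by rw [ht]; linarith [pi_lt_four])))
    (fun p => by
      rw [(hX p.1 p.2).integral_fun_comp (f := fun x => exp (π / (8 * v) * x ^ 2)) (by fun_prop),
        integral_exp_mul_sq_gaussianReal hv (by rw [ht]; linarith [pi_lt_four]), ht]
      exact inv_sqrt_one_sub_pi_div_four_le_pi)
  convert h using 1
  rw [Fintype.card_prod, Nat.cast_mul]
  field_simp

lemma integral_maxAbsEntry_le [Nonempty m] [Nonempty n] (hv : v ≠ 0)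
    (hmeas : ∀ i j, Measurable fun ω => X ω i j)
    (hX : ∀ i j, HasLaw (fun ω => X ω i j) (gaussianReal 0 v) μ) :
    ∫ ω, maxAbsEntry (X ω) ∂μ ≤ √(8 * v / π * log (Fintype.card m * Fintype.card n * π)) :=
  (integral_le_sqrt_integral_sq (fun _ => maxAbsEntry_nonneg _) (integrable_maxAbsEntry hmeas hX)
    (integrable_maxAbsEntry_sq hmeas hX)).trans
    (sqrt_le_sqrt (integral_maxAbsEntry_sq_le hv hmeas hX))

lemma sqrt_le_integral_frobNorm [Nonempty m] [Nonempty n] (hv : v ≠ 0)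
    (hmeas : ∀ i j, Measurable fun ω => X ω i j)
    (hX : ∀ i j, HasLaw (fun ω => X ω i j) (gaussianReal 0 v) μ) :
    √(Fintype.card m * Fintype.card n * (2 * v / π)) ≤ ∫ ω, frobNorm (X ω) ∂μ := by
  set c : ℝ := Fintype.card m * Fintype.card n
  have hc : 0 < √c := sqrt_pos.2 (by positivity)
  have habs (i : m) (j : n) : Integrable (fun ω => |X ω i j|) μ :=
    (hX i j).integrable_fun_comp ((memLp_id_gaussianReal 1).integrable le_rfl).abs
  have hsum : ∫ ω, ∑ i, ∑ j, |X ω i j| ∂μ = c * √(2 * v / π) := by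
    rw [integral_finsetSum _ fun i _ => integrable_finsetSum _ fun j _ => habs i j]
    simp_rw [integral_finsetSum _ fun j _ => habs _ j]
    simp [(hX _ _).integral_fun_comp continuous_abs.aestronglyMeasurable,
      integral_abs_gaussianReal hv, c, mul_assoc]
  have hle : ∫ ω, ∑ i, ∑ j, |X ω i j| ∂μ ≤ √c * ∫ ω, frobNorm (X ω) ∂μ := by
    rw [← integral_const_mul]
    exact integral_mono (integrable_finsetSum _ fun i _ => integrable_finsetSum _ fun j _ =>
      habs i j) ((integrable_frobNorm hmeas hX).const_mul _)
      fun ω => sum_abs_le_sqrt_card_mul_frobNorm (X ω)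
  rw [sqrt_mul (by positivity)]
  refine le_of_mul_le_mul_left ?_ hc
  calc √c * (√c * √(2 * v / π)) = ∫ ω, ∑ i, ∑ j, |X ω i j| ∂μ := by
        rw [hsum, ← mul_assoc, mul_self_sqrt (by positivity)]
    _ ≤ √c * ∫ ω, frobNorm (X ω) ∂μ := hle

end GaussianMatrix

theorem rtn_expected_error_bound_general (m n : ℕ) (hm : 0 < m) (hn : 0 < n)
    (qmax : ℝ) (hq : 0 < qmax)
    {Ω : Type*} [MeasurableSpace Ω] (μ : Measure Ω) [IsProbabilityMeasure μ]
    (v : NNReal) (hv : 0 < v)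
    (X : Ω → Matrix (Fin m) (Fin n) ℝ)
    (hmeas : ∀ i j, Measurable fun ω => X ω i j)
    (hgauss : ∀ i j, Measure.map (fun ω => X ω i j) μ = gaussianReal 0 v) :
    let QX : Ω → Matrix (Fin m) (Fin n) ℝ := fun ω i j =>
      if (fun j' => X ω i j') = 0 then 0
      else ((⨆ j', |X ω i j'|) / qmax) * (round (X ω i j / ((⨆ j', |X ω i j'|) / qmax)) : ℝ)
    ∫ ω, frobNorm (X ω - QX ω) ∂μ ≤
      (Real.sqrt (Real.log (m * n * Real.pi)) / qmax) * ∫ ω, frobNorm (X ω) ∂μ := by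
  intro QX
  show ∫ ω, frobNorm (X ω - rtnQuantize qmax (X ω)) ∂μ ≤ _
  have : Nonempty (Fin m) := ⟨⟨0, hm⟩⟩
  have : Nonempty (Fin n) := ⟨⟨0, hn⟩⟩
  have hX (i j) : HasLaw (fun ω => X ω i j) (gaussianReal 0 v) μ :=
    ⟨(hmeas i j).aemeasurable, hgauss i j⟩
  have hmax := integral_maxAbsEntry_le hv.ne' hmeas hX
  have hfrob := sqrt_le_integral_frobNorm hv.ne' hmeas hX
  simp only [Fintype.card_fin] at hmax hfrob
  calc ∫ ω, frobNorm (X ω - rtnQuantize qmax (X ω)) ∂μ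
      ≤ ∫ ω, √(m * n) * (maxAbsEntry (X ω) / (2 * qmax)) ∂μ :=
        integral_mono_of_nonneg (ae_of_all _ fun _ => sqrt_nonneg _)
          (((integrable_maxAbsEntry hmeas hX).div_const _).const_mul _)
          (ae_of_all _ fun ω => by
            simpa only [Fintype.card_fin] using frobNorm_sub_rtnQuantize_le hq (X ω))
    _ = √(m * n) / (2 * qmax) * ∫ ω, maxAbsEntry (X ω) ∂μ := by
        rw [integral_const_mul, integral_div]; ring
    _ ≤ √(m * n) / (2 * qmax) * √(8 * v / π * log (m * n * π)) := by gcongr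
    _ = √(log (m * n * π)) / qmax * √(m * n * (2 * v / π)) := by
        rw [show (8 * v / π * log (m * n * π) : ℝ) = 2 ^ 2 * ((2 * v / π) * log (m * n * π)) by
          ring, sqrt_mul (x := 2 ^ 2) (by positivity), sqrt_sq zero_le_two,
          sqrt_mul (x := 2 * v / π) (by positivity), sqrt_mul (x := m * n) (by positivity)]
        field_simp
    _ ≤ √(log (m * n * π)) / qmax * ∫ ω, frobNorm (X ω) ∂μ := by gcongr

/-- Proposition 2: for a random `m×n` matrix `X` with i.i.d. centered Gaussian entries of
variance `v > 0` and per-row round-to-nearest quantization `Q` with scale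
`s_i = max_j |X_{ij}| / q_max` (rows that vanish are quantized to `0`),
`𝔼[‖X − Q(X)‖_F] ≤ (√(log(mn·π)) / q_max) · 𝔼[‖X‖_F]`. -/
theorem rtn_expected_error_bound (m n : ℕ) (hm : 0 < m) (hn : 0 < n)
    (qmax : ℝ) (hq : 0 < qmax)
    {Ω : Type*} [MeasurableSpace Ω] (μ : Measure Ω) [IsProbabilityMeasure μ]
    (v : NNReal) (hv : 0 < v)
    (X : Ω → Matrix (Fin m) (Fin n) ℝ)
    (hmeas : ∀ i j, Measurable fun ω => X ω i j)
    (hindep : iIndepFun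
      (fun (p : Fin m × Fin n) ω => X ω p.1 p.2) μ)
    (hgauss : ∀ i j, Measure.map (fun ω => X ω i j) μ = gaussianReal 0 v) :
    let QX : Ω → Matrix (Fin m) (Fin n) ℝ := fun ω i j =>
      if (fun j' => X ω i j') = 0 then 0
      else ((⨆ j', |X ω i j'|) / qmax) * (round (X ω i j / ((⨆ j', |X ω i j'|) / qmax)) : ℝ)
    ∫ ω, frobNorm (X ω - QX ω) ∂μ ≤
      (Real.sqrt (Real.log (m * n * Real.pi)) / qmax) * ∫ ω, frobNorm (X ω) ∂μ :=
  rtn_expected_error_bound_general m n hm hn qmax hq μ v hv X hmeas hgauss
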